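/- The thermodynamic limit of the Curie-Weiss pressure exists and equals the variational expression: lim_{N→∞} (1/N) ln Z_N(β) = sup_{M ∈ [-1,1]} { ln 2 + ln cosh(βM) - (β/2) M² } for every β ≥ 0. -/

import Mathlib

open Real Filter

noncomputable def spin (b : Bool) : ℝ := if b then 1 else -1

noncomputable def mag (N : ℕ) (σ : Fin N → Bool) : ℝ :=
  (1 / (N : ℝ)) * ∑ i : Fin N, spin (σ i)

noncomputable def Zcw (N : ℕ) (β : ℝ) : ℝ :=
  ∑ σ : Fin N → Bool, Real.exp (β * N / 2 * (mag N σ) ^ 2)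

/-!
Linearize the quadratic energy: for `β ≥ 0`, `β m² / 2 ≥ β M m - β M² / 2` with equality at
`M = m`. For fixed `M` the linearized Boltzmann weights factorize over the spins and sum to
`exp (N f(M))`, where `f(M) = log 2 + log cosh (β M) - β M² / 2`. Hence `Z_N ≥ exp (N f(M))` for
every `M`, while taking `M = m(σ)` and grouping the configurations by their magnetization, which
takes at most `N + 1` values in `[-1, 1]`, gives `Z_N ≤ (N + 1) exp (N sup f)`.
-/

open Finset

noncomputable def cwFunctional (β M : ℝ) : ℝ :=
  log 2 + log (cosh (β * M)) - (β / 2) * M ^ 2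

noncomputable def cwPressure (β : ℝ) : ℝ :=
  ⨆ M : Set.Icc (-1 : ℝ) 1, cwFunctional β M

lemma continuous_cwFunctional (β : ℝ) : Continuous (cwFunctional β) := by
  unfold cwFunctional
  have hlog : Continuous fun M => log (cosh (β * M)) :=
    (by fun_prop : Continuous fun M => cosh (β * M)).log fun M => (cosh_pos _).ne'
  fun_prop

lemma bddAbove_range_cwFunctional (β : ℝ) :
    BddAbove (Set.range fun M : Set.Icc (-1 : ℝ) 1 => cwFunctional β M) := by
  rw [← Set.image_eq_range]
  exact (isCompact_Icc.image (continuous_cwFunctional β)).bddAbove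

lemma cwFunctional_le_cwPressure (β : ℝ) {M : ℝ} (hM : M ∈ Set.Icc (-1 : ℝ) 1) :
    cwFunctional β M ≤ cwPressure β :=
  le_ciSup (bddAbove_range_cwFunctional β) ⟨M, hM⟩

lemma cwPressure_le (β : ℝ) {c : ℝ} (h : ∀ M ∈ Set.Icc (-1 : ℝ) 1, cwFunctional β M ≤ c) :
    cwPressure β ≤ c :=
  haveI : Nonempty (Set.Icc (-1 : ℝ) 1) := ⟨⟨0, by norm_num⟩⟩
  ciSup_le fun M => h M M.2

lemma natCast_mul_mag (N : ℕ) (σ : Fin N → Bool) :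
    (N : ℝ) * mag N σ = ∑ i, spin (σ i) := by
  rcases Nat.eq_zero_or_pos N with rfl | hN
  · simp
  · rw [mag, ← mul_assoc, mul_one_div_cancel (by positivity), one_mul]

lemma abs_mag_le_one (N : ℕ) (σ : Fin N → Bool) : |mag N σ| ≤ 1 := by
  have hspin : ∀ b, |spin b| = 1 := by intro b; cases b <;> simp [spin]
  have hsum : |∑ i, spin (σ i)| ≤ N := by
    simpa [hspin] using abs_sum_le_sum_abs (fun i => spin (σ i)) univ
  rw [mag, abs_mul, abs_of_nonneg (by positivity)]
  rcases Nat.eq_zero_or_pos N with rfl | hN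
  · simp
  · rw [one_div_mul_eq_div, div_le_one (by positivity)]
    exact hsum

lemma mag_eq_card (N : ℕ) (σ : Fin N → Bool) :
    mag N σ = (2 * (univ.filter fun i => σ i = true).card - N) / N := by
  have hspin : ∀ b : Bool, spin b = 2 * (if b = true then 1 else 0) - 1 := by
    intro b; cases b <;> norm_num [spin]
  simp only [mag, hspin, sum_sub_distrib, ← mul_sum, sum_boole,
    sum_const, card_univ, Fintype.card_fin, nsmul_eq_mul, mul_one]
  ring

lemma card_image_mag_le (N : ℕ) :
    (univ.image (mag N)).card ≤ N + 1 := by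
  have hsub : univ.image (mag N) ⊆
      (range (N + 1)).image fun k : ℕ => (2 * (k : ℝ) - N) / N := by
    intro x hx
    obtain ⟨σ, -, rfl⟩ := mem_image.1 hx
    refine mem_image.2 ⟨(univ.filter fun i => σ i = true).card, ?_, (mag_eq_card N σ).symm⟩
    exact mem_range.2 (Nat.lt_succ_of_le ((card_filter_le _ _).trans_eq (by simp)))
  exact (card_le_card hsub).trans (card_image_le.trans_eq (card_range _))

lemma sum_exp_mul_sum_spin (N : ℕ) (c : ℝ) :
    ∑ σ : Fin N → Bool, exp (c * ∑ i, spin (σ i)) = (2 * cosh c) ^ N := by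
  simp_rw [mul_sum, exp_sum]
  rw [← Fintype.sum_pow (fun b => exp (c * spin b)) N, Fintype.sum_bool, cosh_eq]
  simp only [spin, if_true, Bool.false_eq_true, if_false]
  ring_nf

lemma sum_exp_linearized (β M : ℝ) (N : ℕ) :
    ∑ σ : Fin N → Bool, exp (N * (β * M * mag N σ - β / 2 * M ^ 2))
      = exp (N * cwFunctional β M) := by
  have hexp : ∀ σ : Fin N → Bool, exp (N * (β * M * mag N σ - β / 2 * M ^ 2))
      = exp ((β * M) * ∑ i, spin (σ i)) / exp (N * (β / 2 * M ^ 2)) := by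
    intro σ
    rw [← exp_sub, ← natCast_mul_mag]
    ring_nf
  have hcosh : (2 * cosh (β * M)) ^ N
      = exp (N * (log 2 + log (cosh (β * M)))) := by
    rw [exp_nat_mul, exp_add, exp_log two_pos, exp_log (cosh_pos _)]
  rw [sum_congr rfl fun σ _ => hexp σ, ← sum_div, sum_exp_mul_sum_spin, hcosh,
    ← exp_sub, cwFunctional]
  ring_nf

lemma linearized_le_energy {β : ℝ} (hβ : 0 ≤ β) (M m : ℝ) :
    β * M * m - β / 2 * M ^ 2 ≤ β / 2 * m ^ 2 := by
  nlinarith [mul_nonneg hβ (sq_nonneg (m - M))]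

lemma Zcw_eq_sum_linearized_mag (N : ℕ) (β : ℝ) :
    Zcw N β = ∑ σ : Fin N → Bool,
      exp (N * (β * mag N σ * mag N σ - β / 2 * mag N σ ^ 2)) := by
  refine sum_congr rfl fun σ _ => ?_
  ring_nf

lemma exp_mul_cwFunctional_le_Zcw {β : ℝ} (hβ : 0 ≤ β) (N : ℕ) (M : ℝ) :
    exp (N * cwFunctional β M) ≤ Zcw N β := by
  rw [← sum_exp_linearized]
  refine sum_le_sum fun σ _ => exp_le_exp.2 ?_
  calc (N : ℝ) * (β * M * mag N σ - β / 2 * M ^ 2) ≤ N * (β / 2 * mag N σ ^ 2) :=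
        mul_le_mul_of_nonneg_left (linearized_le_energy hβ M _) N.cast_nonneg
    _ = β * N / 2 * mag N σ ^ 2 := by ring

lemma Finset.sum_le_sum_image_sum {ι κ : Type*} [Fintype ι] [DecidableEq κ]
    (g : ι → κ) (f : ι → κ → ℝ) (hf : ∀ i k, 0 ≤ f i k) :
    ∑ i, f i (g i) ≤ ∑ k ∈ univ.image g, ∑ i, f i k := by
  rw [sum_comm]
  exact sum_le_sum fun i _ =>
    single_le_sum (fun k _ => hf i k) (mem_image_of_mem g (mem_univ i))

lemma Zcw_le_succ_mul_exp_cwPressure (N : ℕ) (β : ℝ) :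
    Zcw N β ≤ (N + 1) * exp (N * cwPressure β) := by
  calc Zcw N β ≤ ∑ M ∈ univ.image (mag N), exp (N * cwFunctional β M) := by
        rw [Zcw_eq_sum_linearized_mag]
        simp_rw [← sum_exp_linearized]
        exact sum_le_sum_image_sum (mag N)
          (fun σ M => exp (N * (β * M * mag N σ - β / 2 * M ^ 2))) fun _ _ => (exp_pos _).le
    _ ≤ (univ.image (mag N)).card • exp (N * cwPressure β) := by
        refine sum_le_card_nsmul _ _ _ fun M hM => ?_
        obtain ⟨σ, -, rfl⟩ := mem_image.1 hM
        exact exp_le_exp.2 (mul_le_mul_of_nonneg_left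
          (cwFunctional_le_cwPressure β (abs_le.1 (abs_mag_le_one N σ))) N.cast_nonneg)
    _ ≤ (N + 1) * exp (N * cwPressure β) := by
        rw [nsmul_eq_mul]
        gcongr
        exact_mod_cast card_image_mag_le N

lemma Zcw_pos (N : ℕ) (β : ℝ) : 0 < Zcw N β :=
  sum_pos (fun _ _ => exp_pos _) univ_nonempty

lemma cwPressure_le_inv_mul_log_Zcw {β : ℝ} (hβ : 0 ≤ β) {N : ℕ} (hN : 0 < N) :
    cwPressure β ≤ 1 / (N : ℝ) * log (Zcw N β) := by
  have hNR : (0 : ℝ) < N := by exact_mod_cast hN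
  refine cwPressure_le β fun M _ => ?_
  rw [one_div_mul_eq_div, le_div_iff₀' hNR, ← log_exp (N * cwFunctional β M)]
  exact log_le_log (exp_pos _) (exp_mul_cwFunctional_le_Zcw hβ N M)

lemma inv_mul_log_Zcw_le {N : ℕ} (hN : 0 < N) (β : ℝ) :
    1 / (N : ℝ) * log (Zcw N β) ≤ 1 / (N : ℝ) * log (N + 1) + cwPressure β := by
  have hNR : (0 : ℝ) < N := by exact_mod_cast hN
  have hlog : log (Zcw N β) ≤ log (N + 1) + N * cwPressure β := by
    calc log (Zcw N β) ≤ log ((N + 1) * exp (N * cwPressure β)) :=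
          log_le_log (Zcw_pos N β) (Zcw_le_succ_mul_exp_cwPressure N β)
      _ = log (N + 1) + N * cwPressure β := by
          rw [log_mul (by positivity) (exp_pos _).ne', log_exp]
  calc 1 / (N : ℝ) * log (Zcw N β) ≤ 1 / (N : ℝ) * (log (N + 1) + N * cwPressure β) :=
        mul_le_mul_of_nonneg_left hlog (by positivity)
    _ = 1 / (N : ℝ) * log (N + 1) + cwPressure β := by field_simp

lemma tendsto_inv_mul_log_succ :
    Tendsto (fun N : ℕ => 1 / (N : ℝ) * log (N + 1)) atTop (nhds 0) := by
  have h := (tendsto_pow_log_div_mul_add_atTop 1 (-1) 1 one_ne_zero).comp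
    (tendsto_atTop_add_const_right _ 1 tendsto_natCast_atTop_atTop)
  refine h.congr fun N => ?_
  simp only [Function.comp, pow_one]
  ring_nf

theorem thermodynamic_limit (β : ℝ) (hβ : 0 ≤ β) :
    Filter.Tendsto (fun N : ℕ => (1 / (N : ℝ)) * Real.log (Zcw N β)) Filter.atTop
      (nhds (⨆ M : Set.Icc (-1 : ℝ) 1,
        (Real.log 2 + Real.log (Real.cosh (β * (M : ℝ))) - (β / 2) * (M : ℝ) ^ 2))) := by
  change Tendsto _ atTop (nhds (cwPressure β))
  have hupper : Tendsto (fun N : ℕ => 1 / (N : ℝ) * log (N + 1) + cwPressure β) atTop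
      (nhds (cwPressure β)) := by
    simpa using tendsto_inv_mul_log_succ.add_const (cwPressure β)
  refine tendsto_of_tendsto_of_tendsto_of_le_of_le' tendsto_const_nhds hupper ?_ ?_
  · filter_upwards [eventually_gt_atTop 0] with N hN using cwPressure_le_inv_mul_log_Zcw hβ hN
  · filter_upwards [eventually_gt_atTop 0] with N hN using inv_mul_log_Zcw_le hN β
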